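/- If G is a hereditary guest class containing K_2, then for every graph H it holds that c_u(G,H) ≤ χ(H)²·(c_f(G,H))². -/

import Mathlib

open SimpleGraph

/-- A class of simple graphs on arbitrary (small) vertex types. -/
def GraphClass : Type 1 := ∀ (V : Type), SimpleGraph V → Prop

/-- The class contains the graph `K₂`. -/
def GraphClass.ContainsK2 (𝒢 : GraphClass) : Prop := 𝒢 (Fin 2) ⊤

/-- Hereditary: closed under induced subgraphs. -/
def GraphClass.Hereditary (𝒢 : GraphClass) : Prop :=
  ∀ (V : Type) (G : SimpleGraph V), 𝒢 V G → ∀ s : Set V, 𝒢 s (G.induce s)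

/-- Monotone: closed under (not necessarily spanning) subgraphs. -/
def GraphClass.MonotoneClass (𝒢 : GraphClass) : Prop :=
  ∀ (V : Type) (G : SimpleGraph V), 𝒢 V G →
    ∀ (s : Set V) (G' : SimpleGraph s), G' ≤ G.induce s → 𝒢 s G'

/-- Component-closed: every connected component of a member is a member. -/
def GraphClass.ComponentClosed (𝒢 : GraphClass) : Prop :=
  ∀ (V : Type) (G : SimpleGraph V), 𝒢 V G →
    ∀ c : G.ConnectedComponent, 𝒢 c.supp (G.induce c.supp)

/-- The vertex-disjoint union of a family of graphs. -/
def disjUnionGraph {ι : Type} {W : ι → Type} (G : ∀ i, SimpleGraph (W i)) :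
    SimpleGraph (Σ i, W i) :=
  SimpleGraph.fromRel (fun p q => ∃ h : p.1 = q.1, (G q.1).Adj (h ▸ p.2) q.2)

/-- Union-closed: closed under finite vertex-disjoint unions. -/
def GraphClass.UnionClosed (𝒢 : GraphClass) : Prop :=
  ∀ (ι : Type), Finite ι → ∀ (W : ι → Type) (G : ∀ i, SimpleGraph (W i)),
    (∀ i, 𝒢 (W i) (G i)) → 𝒢 _ (disjUnionGraph G)

/-- The union-closure of a class: all graphs isomorphic to a finite
vertex-disjoint union of members of the class. -/
def GraphClass.unionClosure (𝒢 : GraphClass) : GraphClass :=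
  fun V G => ∃ (ι : Type) (_ : Finite ι) (W : ι → Type) (Gs : ∀ i, SimpleGraph (W i)),
    (∀ i, 𝒢 (W i) (Gs i)) ∧ Nonempty (G ≃g disjUnionGraph Gs)

/-- A `𝒢`-cover of a host graph `H`: a finite family of finite guest graphs together
with homomorphisms to `H` such that every edge of `H` is hit. -/
structure GraphCover {V : Type} (H : SimpleGraph V) : Type 1 where
  ι : Type
  finι : Finite ι
  W : ι → Type
  finW : ∀ i, Finite (W i)
  G : ∀ i, SimpleGraph (W i)
  φ : ∀ i, G i →g H
  edge_surj : ∀ ⦃u v : V⦄, H.Adj u v → ∃ i, ∃ a b, (G i).Adj a b ∧ φ i a = u ∧ φ i b = v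

namespace GraphCover

variable {V : Type} {H : SimpleGraph V}

/-- All guests belong to the class `𝒢`. -/
def InClass (c : GraphCover H) (𝒢 : GraphClass) : Prop := ∀ i, 𝒢 (c.W i) (c.G i)

/-- The cover is injective on each guest. -/
def Injective (c : GraphCover H) : Prop := ∀ i, Function.Injective (c.φ i)

/-- The total number of preimages of a vertex `v` of the host. -/
noncomputable def mult (c : GraphCover H) (v : V) : ℕ :=
  Nat.card {p : Σ i, c.W i // c.φ p.1 p.2 = v}

/-- `s`-local: every host vertex has at most `s` preimages. -/
def IsLocal (c : GraphCover H) (s : ℕ) : Prop := ∀ v, c.mult v ≤ s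

/-- `t`-global: at most `t` guests are used. -/
def IsGlobal (c : GraphCover H) (t : ℕ) : Prop := Nat.card c.ι ≤ t

/-- The guests can be grouped into `t` groups of pairwise vertex-disjoint guests,
i.e. the cover uses at most `t` members of the union-closure of the class. -/
def IsUnion (c : GraphCover H) (t : ℕ) : Prop :=
  ∃ f : c.ι → Fin t, ∀ i j, i ≠ j → f i = f j →
    Disjoint (Set.range (c.φ i)) (Set.range (c.φ j))

end GraphCover

/-- The global `𝒢`-covering number. -/
noncomputable def globalCN (𝒢 : GraphClass) {V : Type} (H : SimpleGraph V) : ℕ :=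
  sInf {t | ∃ c : GraphCover H, c.InClass 𝒢 ∧ c.Injective ∧ c.IsGlobal t}

/-- The union `𝒢`-covering number. -/
noncomputable def unionCN (𝒢 : GraphClass) {V : Type} (H : SimpleGraph V) : ℕ :=
  sInf {t | ∃ c : GraphCover H, c.InClass 𝒢 ∧ c.Injective ∧ c.IsUnion t}

/-- The local `𝒢`-covering number. -/
noncomputable def localCN (𝒢 : GraphClass) {V : Type} (H : SimpleGraph V) : ℕ :=
  sInf {s | ∃ c : GraphCover H, c.InClass 𝒢 ∧ c.Injective ∧ c.IsLocal s}

/-- The folded `𝒢`-covering number. -/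
noncomputable def foldedCN (𝒢 : GraphClass) {V : Type} (H : SimpleGraph V) : ℕ :=
  sInf {s | ∃ c : GraphCover H, c.InClass 𝒢 ∧ c.IsLocal s}

/-- `H` has treewidth at most `w`, via tree-decompositions. -/
def TreewidthLE {V : Type} (H : SimpleGraph V) (w : ℕ) : Prop :=
  ∃ (ι : Type) (T : SimpleGraph ι) (bag : ι → Set V),
    T.Connected ∧ T.IsAcyclic ∧
    (∀ v, ∃ i, v ∈ bag i) ∧
    (∀ ⦃u v⦄, H.Adj u v → ∃ i, u ∈ bag i ∧ v ∈ bag i) ∧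
    (∀ v, (T.induce {i | v ∈ bag i}).Connected) ∧
    (∀ i, Nat.card (bag i) ≤ w + 1)

/-- `G` has maximum average degree at most `d`. -/
def madLE {V : Type} (G : SimpleGraph V) (d : ℚ) : Prop :=
  ∀ s : Set V, s.Nonempty → (2 * Nat.card (G.induce s).edgeSet : ℚ) ≤ d * Nat.card s

/-- A star forest: an acyclic graph with no path on four vertices, i.e. every
connected component is a star. -/
def IsStarForest {V : Type} (F : SimpleGraph V) : Prop :=
  F.IsAcyclic ∧ ∀ a b c d, F.Adj a b → F.Adj b c → F.Adj c d → a = c ∨ b = d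

/-- `F` is a weak induced subgraph of `H`: a subgraph each of whose connected
components is an induced subgraph of `H`. -/
def IsWeakInduced {V : Type} (F H : SimpleGraph V) : Prop :=
  F ≤ H ∧ ∀ u v, F.Reachable u v → H.Adj u v → F.Adj u v

/-- No induced cycle of length at least 4. -/
def IsChordal {V : Type} (G : SimpleGraph V) : Prop :=
  ∀ (n : ℕ), 4 ≤ n → ∀ s : Set V, ¬ Nonempty ((G.induce s) ≃g SimpleGraph.cycleGraph n)

/-- The intersection graph of a family of sets. -/
def intersectionGraph {ι V : Type} (S : ι → Set V) : SimpleGraph ι :=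
  SimpleGraph.fromRel (fun i j => (S i ∩ S j).Nonempty)

/-- The shift graph of a directed graph `D`: vertices are the directed edges,
and `uv` is adjacent to `xy` iff `v = x` (or symmetrically `y = u`). -/
def shiftGraph {V : Type} (D : V → V → Prop) : SimpleGraph {p : V × V // D p.1 p.2} :=
  SimpleGraph.fromRel (fun e f => e.val.2 = f.val.1)

/-! A folded cover with fibers of size at most `s` is unfolded by labelling each fiber injectively
with `Fin s` and fixing a proper `k`-colouring `γ` of `H`. For colours `p ≠ q` and labels `l, l'`,
keep in every guest only the preimages of colour `p` with label `l` and those of colour `q` with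
label `l'`: on the kept vertices the cover is injective, so the kept induced subgraphs of all
guests are pairwise vertex-disjoint in `H`, and every guest edge `ab` survives in the layer
`(γ (φ a), γ (φ b), lab a, lab b)`. Heredity keeps the pieces in `𝒢`, giving at most `(k s)²`
unions. -/

namespace GraphCover

variable {V : Type} {H : SimpleGraph V}

def proj (c : GraphCover H) (x : Σ i, c.W i) : V := c.φ x.1 x.2

theorem exists_injective_isUnion_of_layers {𝒢 : GraphClass} (hher : 𝒢.Hereditary)
    (c : GraphCover H) (hc : c.InClass 𝒢) {κ : Type} [Fintype κ] (S : κ → Set (Σ i, c.W i))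
    (hinj : ∀ j, (S j).InjOn c.proj)
    (hcov : ∀ i a b, (c.G i).Adj a b → ∃ j, ⟨i, a⟩ ∈ S j ∧ ⟨i, b⟩ ∈ S j)
    {t : ℕ} (ht : Fintype.card κ ≤ t) :
    ∃ c' : GraphCover H, c'.InClass 𝒢 ∧ c'.Injective ∧ c'.IsUnion t := by
  have := c.finι
  have := c.finW
  let piece (j : κ) (i : c.ι) : Set (c.W i) := {a | ⟨i, a⟩ ∈ S j}
  refine ⟨{
    ι := κ × c.ι
    finι := inferInstance
    W := fun ji => piece ji.1 ji.2
    finW := fun _ => inferInstance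
    G := fun ji => (c.G ji.2).induce (piece ji.1 ji.2)
    φ := fun ji => (c.φ ji.2).comp (Embedding.induce _).toHom
    edge_surj := ?_ }, fun ji => hher _ _ (hc ji.2) _, ?_, ?_⟩
  · intro u v huv
    obtain ⟨i, a, b, hab, rfl, rfl⟩ := c.edge_surj huv
    obtain ⟨j, ha, hb⟩ := hcov i a b hab
    exact ⟨(j, i), ⟨a, ha⟩, ⟨b, hb⟩, hab, rfl, rfl⟩
  · rintro ⟨j, i⟩ a b hab
    exact Subtype.ext (sigma_mk_injective (hinj j a.2 b.2 hab))
  · refine ⟨fun ji => Fin.castLE ht (Fintype.equivFin κ ji.1), ?_⟩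
    rintro ⟨j, i⟩ ⟨j', i'⟩ hne hf
    obtain rfl : j = j' := (Fintype.equivFin κ).injective (Fin.castLE_injective ht hf)
    rw [Set.disjoint_left]
    rintro _ ⟨a, rfl⟩ ⟨b, hb⟩
    have := hinj j b.2 a.2 hb
    exact hne (congrArg (Prod.mk j) (congrArg Sigma.fst this).symm)

theorem IsLocal.exists_fiber_injective {c : GraphCover H} {s : ℕ} (hloc : c.IsLocal s) :
    ∃ lab : (Σ i, c.W i) → Fin s, ∀ x y, c.proj x = c.proj y → lab x = lab y → x = y := by
  have := c.finι
  have := c.finW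
  let L (v : V) : {x // c.proj x = v} → Fin s :=
    Fin.castLE (hloc v) ∘ Finite.equivFin _
  have hL (v : V) : Function.Injective (L v) :=
    (Fin.castLE_injective _).comp (Finite.equivFin _).injective
  refine ⟨fun x => L (c.proj x) ⟨x, rfl⟩, fun x y hxy hlab => ?_⟩
  have key : ∀ (v : V) (h : c.proj x = v), L (c.proj x) ⟨x, rfl⟩ = L v ⟨x, h⟩ := by
    rintro _ rfl; rfl
  dsimp only at hlab
  rw [key _ hxy] at hlab
  exact congrArg Subtype.val (hL _ hlab)

theorem exists_injective_isUnion_of_coloring {𝒢 : GraphClass} (hher : 𝒢.Hereditary)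
    {c : GraphCover H} (hc : c.InClass 𝒢) {k s : ℕ} (γ : H.Coloring (Fin k))
    {lab : (Σ i, c.W i) → Fin s} (hlab : ∀ x y, c.proj x = c.proj y → lab x = lab y → x = y) :
    ∃ c' : GraphCover H, c'.InClass 𝒢 ∧ c'.Injective ∧ c'.IsUnion (k ^ 2 * s ^ 2) := by
  let τ (x : Σ i, c.W i) : Fin k × Fin s := (γ (c.proj x), lab x)
  let κ := {pq : (Fin k × Fin s) × (Fin k × Fin s) // pq.1.1 ≠ pq.2.1}
  refine c.exists_injective_isUnion_of_layers hher hc (κ := κ)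
    (fun pq => {x | τ x = pq.1.1 ∨ τ x = pq.1.2}) ?_ ?_ ?_
  · rintro ⟨pq, hpq⟩ x hx y hy hxy
    have hτ : τ x = τ y → x = y := fun h => hlab x y hxy (congrArg Prod.snd h)
    have hγ : (τ x).1 = (τ y).1 := congrArg γ hxy
    rcases hx with hx | hx <;> rcases hy with hy | hy
    · exact hτ (hx.trans hy.symm)
    · exact absurd (by rw [← hx, ← hy, hγ]) hpq
    · exact absurd (by rw [← hx, ← hy, hγ]) hpq
    · exact hτ (hx.trans hy.symm)
  · intro i a b hab
    exact ⟨⟨(τ ⟨i, a⟩, τ ⟨i, b⟩), γ.valid ((c.φ i).map_adj hab)⟩, Or.inl rfl, Or.inr rfl⟩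
  · calc Fintype.card κ ≤ Fintype.card ((Fin k × Fin s) × (Fin k × Fin s)) :=
          Fintype.card_subtype_le _
      _ = k ^ 2 * s ^ 2 := by simp only [Fintype.card_prod, Fintype.card_fin]; ring

def ofDarts [Finite V] (H : SimpleGraph V) : GraphCover H where
  ι := H.Dart
  finι := Finite.of_injective _ Dart.toProd_injective
  W := fun _ => Fin 2
  finW := fun _ => inferInstance
  G := fun _ => ⊤
  φ := fun d => ⟨![d.fst, d.snd], fun {a b} hab => by
    fin_cases a <;> fin_cases b
    exacts [absurd rfl hab, d.adj, d.adj.symm, absurd rfl hab]⟩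
  edge_surj := fun u v huv => ⟨⟨(u, v), huv⟩, 0, 1, by simp, rfl, rfl⟩

theorem isLocal_card (c : GraphCover H) : c.IsLocal (Nat.card (Σ i, c.W i)) := by
  have := c.finι
  have := c.finW
  exact fun v => Nat.card_le_card_of_injective Subtype.val Subtype.val_injective

end GraphCover

theorem exists_isLocal_foldedCN {𝒢 : GraphClass} (h2 : 𝒢.ContainsK2) {V : Type} [Finite V]
    (H : SimpleGraph V) : ∃ c : GraphCover H, c.InClass 𝒢 ∧ c.IsLocal (foldedCN 𝒢 H) :=
  Nat.sInf_mem (s := {s | ∃ c : GraphCover H, c.InClass 𝒢 ∧ c.IsLocal s})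
    ⟨_, GraphCover.ofDarts H, fun _ => h2, (GraphCover.ofDarts H).isLocal_card⟩

/-- for a hereditary guest class,
`c_u(𝒢,H) ≤ χ(H)² · c_f(𝒢,H)²`. -/
theorem union_le_chrom_sq_mul_folded_sq (𝒢 : GraphClass) (h2 : 𝒢.ContainsK2)
    (hher : 𝒢.Hereditary) {V : Type} [Fintype V] (H : SimpleGraph V) :
    unionCN 𝒢 H ≤ H.chromaticNumber.toNat ^ 2 * (foldedCN 𝒢 H) ^ 2 := by
  obtain ⟨c, hc, hloc⟩ := exists_isLocal_foldedCN h2 H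
  obtain ⟨lab, hlab⟩ := hloc.exists_fiber_injective
  obtain ⟨γ⟩ := H.colorable_chromaticNumber_of_fintype
  exact Nat.sInf_le (GraphCover.exists_injective_isUnion_of_coloring hher hc γ hlab)
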